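/- Every ϕ-irreducible full-dimensional Metropolis–Hastings algorithm is Harris recurrent. That is: let X be a state space with σ-algebra F, ν a reference measure, f: X → (0, ∞) with ∫_X f dν < ∞, and π(A) = ∫_A f dν / ∫_X f dν; assume π{x} < 1 for all x ∈ X. Let q: X × X → [0, ∞) be jointly measurable with ∫ q(x, y) ν(dy) = 1 for all x, and let α(x, y) = min[1, f(y)q(y,x)/(f(x)q(x,y))] (with α(x, y) = 1 if f(x)q(x,y) = 0). Consider the Markov chain that, from X_n, proposes Y_{n+1} with density q(X_n, ·) with respect to ν, sets X_{n+1} = Y_{n+1} with probability α(X_n, Y_{n+1}), and otherwise sets X_{n+1} = X_n. If this chain is ϕ-irreducible, then for every A ∈ F with π(A) > 0 and every x ∈ X, P(τ_A < ∞ | X_0 = x) = 1. -/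

import Mathlib

/-!
Detailed balance, `f x * (q x y * α x y) = min (f x * q x y) (f y * q y x)`, makes `π`
stationary, and apart from rejections, which leave the chain at `x`, every transition has a
density with respect to `ν`, hence (as `f > 0`) is absolutely continuous with respect to `π`.

For a stationary chain, `h = 1_A + 1_{Aᶜ} P[τ_A < ∞ | X₀ = ·]` satisfies `P h ≤ h` with equal
`π`-integrals, so `P h = h` `π`-a.e. and `{h = 1}` is absorbing up to a `π`-null set. It contains
`A`, so irreducibility, upgraded from `φ` to `π` by a similar absorbing-set argument, forces
`π {h < 1} = 0`. From an arbitrary `x` the chain leaves `x` with positive probability (otherwise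
`x` would be absorbing and `π` the point mass at `x`), and then lands where `h = 1`.
-/

open MeasureTheory ProbabilityTheory Filter Set ENNReal

namespace MCMCHarris

variable {X : Type*} [MeasurableSpace X]

/-- The `n`-step transition kernel `P^n`. -/
noncomputable def iterK (P : Kernel X X) : ℕ → Kernel X X
  | 0 => Kernel.id
  | n + 1 => (iterK P n).comp P

/-- `hitLE P A n x` is the probability `P[τ_A ≤ n | X₀ = x]` that the chain started at `x`
hits `A` within the first `n` steps, where `τ_A = inf {n ≥ 1 : Xₙ ∈ A}`. -/
noncomputable def hitLE (P : Kernel X X) (A : Set X) : ℕ → X → ℝ≥0∞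
  | 0 => fun _ => 0
  | n + 1 => fun x => ∫⁻ y, (A.indicator (fun _ => 1) y + Aᶜ.indicator (hitLE P A n) y) ∂(P x)

/-- `hitProb P A x` is the probability `P[τ_A < ∞ | X₀ = x]`. -/
noncomputable def hitProb (P : Kernel X X) (A : Set X) (x : X) : ℝ≥0∞ :=
  ⨆ n, hitLE P A n x

/-- `stayLE P A n x` is the probability `P[X_k ∈ A for all 1 ≤ k ≤ n | X₀ = x]`. -/
noncomputable def stayLE (P : Kernel X X) (A : Set X) : ℕ → X → ℝ≥0∞
  | 0 => fun _ => 1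
  | n + 1 => fun x => ∫⁻ y, A.indicator (stayLE P A n) y ∂(P x)

/-- `stayProb P A x` is the probability `P[Xₙ ∈ A for all n ≥ 0 | X₀ = x]`. -/
noncomputable def stayProb (P : Kernel X X) (A : Set X) (x : X) : ℝ≥0∞ :=
  A.indicator (fun x' => ⨅ n, stayLE P A n x') x

/-- `ioProb P A x` is the probability `P[Xₙ ∈ A infinitely often | X₀ = x]`. -/
noncomputable def ioProb (P : Kernel X X) (A : Set X) (x : X) : ℝ≥0∞ :=
  ⨅ N, ∫⁻ y, hitProb P A y ∂(iterK P N x)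

/-- `pathProb P g` is the probability `P[Xₙ = g n for all n | X₀ = g 0]` that the chain
started at `g 0` follows the deterministic trajectory `g`. -/
noncomputable def pathProb (P : Kernel X X) (g : ℕ → X) : ℝ≥0∞ :=
  ⨅ N, ∏ n ∈ Finset.range N, P (g n) {g (n + 1)}

/-- Total variation distance between two measures. -/
noncomputable def tvDist (μ ν : Measure X) : ℝ :=
  ⨆ A : {A : Set X // MeasurableSet A}, |(μ A).toReal - (ν A).toReal|

/-- `π` is a stationary distribution for the kernel `P`. -/
def Stationary (P : Kernel X X) (π : Measure X) : Prop :=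
  ∀ A : Set X, MeasurableSet A → ∫⁻ x, P x A ∂π = π A

/-- The chain `P`, started from any point of `S`, is `φ`-irreducible. -/
def IrreducibleOn (P : Kernel X X) (φ : Measure X) (S : Set X) : Prop :=
  φ ≠ 0 ∧ ∀ x ∈ S, ∀ A : Set X, MeasurableSet A → 0 < φ A → 0 < hitProb P A x

/-- The chain `P` is `φ`-irreducible (from every point of `S`) for some nonzero σ-finite `φ`. -/
def PhiIrreducibleOn (P : Kernel X X) (S : Set X) : Prop :=
  ∃ φ : Measure X, SigmaFinite φ ∧ IrreducibleOn P φ S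

/-- Harris recurrence (for starting points in `S`): every set of positive `π`-measure is
reached in finite time with probability one from every `x ∈ S`. -/
def HarrisRecurrentOn (P : Kernel X X) (π : Measure X) (S : Set X) : Prop :=
  ∀ A : Set X, MeasurableSet A → 0 < π A → ∀ x ∈ S, hitProb P A x = 1

/-- There is a `D`-cycle: disjoint sets `C 0, …, C (D-1)` of positive `π`-measure through
which the chain cycles with probability one. -/
def HasCycle (P : Kernel X X) (π : Measure X) (D : ℕ) : Prop :=
  ∃ C : ℕ → Set X, (∀ i < D, MeasurableSet (C i)) ∧
    (∀ i < D, ∀ j < D, i ≠ j → Disjoint (C i) (C j)) ∧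
    (∀ i < D, 0 < π (C i)) ∧
    ∀ i < D, ∀ x ∈ C i, P x (C ((i + 1) % D)) = 1

/-- The period of the chain is `D`: `D` is the largest positive integer admitting a `D`-cycle. -/
def IsPeriod (P : Kernel X X) (π : Measure X) (D : ℕ) : Prop :=
  0 < D ∧ HasCycle P π D ∧ ∀ D' : ℕ, 0 < D' → HasCycle P π D' → D' ≤ D

/-- The chain is aperiodic: its period is `1`. -/
def Aperiodic (P : Kernel X X) (π : Measure X) : Prop :=
  IsPeriod P π 1

/-- The Cesàro average `(1/D) ∑_{r=1}^D P^{nD+r}(x, ·)`. -/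
noncomputable def cesaro (P : Kernel X X) (D n : ℕ) (x : X) : Measure X :=
  (D : ℝ≥0∞)⁻¹ • ∑ r ∈ Finset.range D, iterK P (n * D + (r + 1)) x

end MCMCHarris

open MCMCHarris MeasureTheory ProbabilityTheory Filter Set ENNReal

namespace MCMCHarris

/-- The Metropolis–Hastings acceptance probability
`α(x,y) = min(1, f(y)q(y,x) / (f(x)q(x,y)))`, set to `1` when `f(x)q(x,y) = 0`. -/
noncomputable def mhAlpha {X : Type*} (f : X → ℝ) (q : X → X → ℝ) (x y : X) : ℝ :=
  if f x * q x y = 0 then 1 else min 1 (f y * q y x / (f x * q x y))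

end MCMCHarris

namespace MCMCHarris

variable {X : Type*}

noncomputable def hitStep (A : Set X) (g : X → ℝ≥0∞) (y : X) : ℝ≥0∞ :=
  A.indicator (fun _ => 1) y + Aᶜ.indicator g y

section HitStep

variable {A : Set X} {g : X → ℝ≥0∞} {y : X}

@[simp]
lemma hitStep_of_mem (hy : y ∈ A) : hitStep A g y = 1 := by
  simp [hitStep, hy]

@[simp]
lemma hitStep_of_notMem (hy : y ∉ A) : hitStep A g y = g y := by
  simp [hitStep, hy]

lemma hitStep_le_one (hg : ∀ y, g y ≤ 1) (y : X) : hitStep A g y ≤ 1 := by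
  by_cases hy : y ∈ A <;> simp [hy, hg]

lemma hitStep_mono {g' : X → ℝ≥0∞} (h : g ≤ g') : hitStep A g ≤ hitStep A g' := fun y => by
  by_cases hy : y ∈ A <;> simp [hy, h y]

end HitStep

section Markov

variable [MeasurableSpace X]

def IsAbsorbing (P : Kernel X X) (S : Set X) : Prop :=
  ∀ z ∈ S, ∀ᵐ y ∂P z, y ∈ S

lemma measurable_hitStep {A : Set X} {g : X → ℝ≥0∞} (hA : MeasurableSet A) (hg : Measurable g) :
    Measurable (hitStep A g) :=
  (measurable_const.indicator hA).add (hg.indicator hA.compl)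

section Hitting

variable {P : Kernel X X} {A : Set X}

lemma hitLE_succ (n : ℕ) (x : X) :
    hitLE P A (n + 1) x = ∫⁻ y, hitStep A (hitLE P A n) y ∂P x :=
  rfl

lemma measurable_hitLE [IsSFiniteKernel P] (hA : MeasurableSet A) (n : ℕ) :
    Measurable (hitLE P A n) := by
  induction n with
  | zero => exact measurable_const
  | succ n ih =>
    exact Measurable.lintegral_kernel_prod_right
      ((measurable_hitStep hA ih).comp measurable_snd)

lemma measurable_hitProb [IsSFiniteKernel P] (hA : MeasurableSet A) :
    Measurable (hitProb P A) :=
  Measurable.iSup fun n => measurable_hitLE hA n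

lemma hitLE_le_one [IsMarkovKernel P] (n : ℕ) (x : X) : hitLE P A n x ≤ 1 := by
  induction n generalizing x with
  | zero => exact zero_le_one
  | succ n ih =>
    calc hitLE P A (n + 1) x ≤ ∫⁻ _, 1 ∂P x := lintegral_mono (hitStep_le_one ih)
      _ = 1 := by simp

lemma hitProb_le_one [IsMarkovKernel P] (x : X) : hitProb P A x ≤ 1 :=
  iSup_le fun n => hitLE_le_one n x

lemma monotone_hitLE : Monotone (hitLE P A) := by
  refine monotone_nat_of_le_succ fun n => ?_
  induction n with
  | zero => exact fun _ => zero_le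
  | succ n ih => exact fun x => lintegral_mono (hitStep_mono ih)

lemma hitProb_eq_lintegral [IsSFiniteKernel P] (hA : MeasurableSet A) (x : X) :
    hitProb P A x = ∫⁻ y, hitStep A (hitProb P A) y ∂P x := by
  have hsucc : hitProb P A x = ⨆ n, hitLE P A (n + 1) x :=
    le_antisymm (iSup_le fun n => le_iSup_of_le n (monotone_hitLE n.le_succ x))
      (iSup_le fun n => le_iSup (fun n => hitLE P A n x) (n + 1))
  simp only [hsucc, hitLE_succ]
  rw [← lintegral_iSup (fun n => measurable_hitStep hA (measurable_hitLE hA n))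
    fun n m hnm => hitStep_mono (monotone_hitLE hnm)]
  congr 1 with y
  by_cases hy : y ∈ A
  · simp [hy]
  · simp [hy, hitProb]

lemma ae_notMem_and_hitProb_eq_zero [IsSFiniteKernel P] (hA : MeasurableSet A) {z : X}
    (hz : hitProb P A z = 0) : ∀ᵐ y ∂P z, y ∉ A ∧ hitProb P A y = 0 := by
  rw [hitProb_eq_lintegral hA,
    lintegral_eq_zero_iff (measurable_hitStep hA (measurable_hitProb hA))] at hz
  filter_upwards [hz] with y hy
  by_cases hyA : y ∈ A
  · simp [hyA] at hy
  · simpa [hyA] using hy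

lemma hitProb_eq_zero_of_ae_mem {S : Set X} (hS : IsAbsorbing P S) (hSA : Disjoint S A)
    {z : X} (hz : ∀ᵐ y ∂P z, y ∈ S) : hitProb P A z = 0 := by
  suffices h : ∀ n z, (∀ᵐ y ∂P z, y ∈ S) → hitLE P A n z = 0 by
    simp [hitProb, fun n => h n z hz]
  intro n
  induction n with
  | zero => exact fun _ _ => rfl
  | succ n ih =>
    intro z hz
    refine (lintegral_congr_ae ?_).trans lintegral_zero
    filter_upwards [hz] with y hy
    simp [hSA.notMem_of_mem_left hy, ih y (hS y hy)]

lemma hitProb_eq_zero_of_apply_eq_dirac [IsSFiniteKernel P] (hA : MeasurableSet A) {x : X}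
    (hx : P x = Measure.dirac x) (hxA : x ∉ A) : hitProb P A x = 0 := by
  suffices h : ∀ n, hitLE P A n x = 0 by simp [hitProb, h]
  intro n
  induction n with
  | zero => rfl
  | succ n ih =>
    rw [hitLE_succ, hx, lintegral_dirac' x (measurable_hitStep hA (measurable_hitLE hA n))]
    simp [hxA, ih]

end Hitting

section Stationary

variable {P : Kernel X X} {π : Measure X}

lemma Stationary.lintegral_lintegral (hπ : Stationary P π) {u : X → ℝ≥0∞} (hu : Measurable u) :
    ∫⁻ x, ∫⁻ y, u y ∂P x ∂π = ∫⁻ y, u y ∂π := by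
  have hbind : π.bind P = π := by
    ext E hE
    rw [Measure.bind_apply hE P.measurable.aemeasurable]
    exact hπ E hE
  conv_rhs => rw [← hbind]
  exact (Measure.lintegral_bind P.measurable.aemeasurable (hbind ▸ hu.aemeasurable)).symm

lemma Stationary.smul (hπ : Stationary P π) (c : ℝ≥0∞) : Stationary P (c • π) := by
  intro E hE
  rw [lintegral_smul_measure, hπ E hE, Measure.smul_apply, smul_eq_mul]

lemma Stationary.ae_lintegral_eq_of_lintegral_le (hπ : Stationary P π) {u : X → ℝ≥0∞}
    (hu : Measurable u) (hfin : ∫⁻ y, u y ∂π ≠ ∞) (hle : ∀ x, ∫⁻ y, u y ∂P x ≤ u x) :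
    ∀ᵐ x ∂π, ∫⁻ y, u y ∂P x = u x :=
  ae_eq_of_ae_le_of_lintegral_le (ae_of_all _ hle) (by rwa [hπ.lintegral_lintegral hu])
    hu.aemeasurable (hπ.lintegral_lintegral hu).ge

lemma Stationary.ae_isAbsorbing_compl [IsMarkovKernel P] [IsFiniteMeasure π]
    (hπ : Stationary P π) {D : Set X} (hD : MeasurableSet D) (habs : IsAbsorbing P D) :
    ∀ᵐ z ∂π, z ∈ Dᶜ → ∀ᵐ y ∂P z, y ∈ Dᶜ := by
  have hsuper : ∀ x, ∫⁻ y, Dᶜ.indicator 1 y ∂P x ≤ Dᶜ.indicator 1 x := by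
    intro x
    rw [lintegral_indicator_one hD.compl]
    by_cases hx : x ∈ D
    · exact ((measure_eq_zero_iff_ae_notMem (s := Dᶜ)).mpr
        ((habs x hx).mono fun y hy hy' => hy' hy)).trans_le zero_le
    · simp [hx, prob_le_one]
  filter_upwards [hπ.ae_lintegral_eq_of_lintegral_le (measurable_one.indicator hD.compl)
    (by simp [lintegral_indicator_one hD.compl]) hsuper] with z hz hzD
  rw [lintegral_indicator_one hD.compl, indicator_of_mem hzD, Pi.one_apply,
    prob_compl_eq_one_iff hD] at hz
  exact measure_eq_zero_iff_ae_notMem.mp hz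

end Stationary

lemma eq_one_of_eq_add_mul {m c a : ℝ≥0∞} (hsum : m + c = 1) (hm : m ≠ 0) (ha : a ≤ 1)
    (h : a = m + c * a) : a = 1 := by
  have hm_top : m ≠ ∞ := ne_top_of_le_ne_top one_ne_top (hsum ▸ le_self_add)
  have hc_top : c * a ≠ ∞ := mul_ne_top (ne_top_of_le_ne_top one_ne_top (hsum ▸ le_add_self))
    (ne_top_of_le_ne_top one_ne_top ha)
  have hsplit : m * a + c * a = m * 1 + c * a := by
    rw [← add_mul, hsum, one_mul, mul_one, ← h]
  exact ((ENNReal.mul_right_inj hm hm_top).mp ((ENNReal.add_left_inj hc_top).mp hsplit))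

-- Phrased as a decomposition because singletons need not be measurable.
def AbsolutelyContinuousOffDiag (P : Kernel X X) (π : Measure X) : Prop :=
  ∀ x, ∃ μ : Measure X, ∃ c : ℝ≥0∞, μ ≪ π ∧ P x = μ + c • Measure.dirac x

section Recurrence

variable {P : Kernel X X} {π : Measure X}

lemma AbsolutelyContinuousOffDiag.apply_eq_zero (hP : AbsolutelyContinuousOffDiag P π)
    {N : Set X} (hN : MeasurableSet N) (hπN : π N = 0) {x : X} (hx : x ∉ N) : P x N = 0 := by
  obtain ⟨μ, c, hμ, hPx⟩ := hP x
  simp [hPx, hμ hπN, Measure.dirac_apply' x hN, hx]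

lemma AbsolutelyContinuousOffDiag.exists_isAbsorbing_diff (hP : AbsolutelyContinuousOffDiag P π)
    {S : Set X} (hS : ∀ᵐ z ∂π, z ∈ S → ∀ᵐ y ∂P z, y ∈ S) :
    ∃ T, π T = 0 ∧ IsAbsorbing P (S \ T) := by
  obtain ⟨T, hbad, hT, hπT⟩ := exists_measurable_superset_of_null (ae_iff.mp hS)
  refine ⟨T, hπT, fun z hz => ?_⟩
  have hzS : ∀ᵐ y ∂P z, y ∈ S := not_not.mp (fun h => hz.2 (hbad fun h' => h (h' hz.1)))
  filter_upwards [hzS, measure_eq_zero_iff_ae_notMem.mp (hP.apply_eq_zero hT hπT hz.2)]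
    with y hyS hyT using ⟨hyS, hyT⟩

variable [IsMarkovKernel P] {φ : Measure X}

lemma IrreducibleOn.hitProb_pos [IsFiniteMeasure π] (hφ : IrreducibleOn P φ univ)
    (hstat : Stationary P π) (hP : AbsolutelyContinuousOffDiag P π)
    {B : Set X} (hB : MeasurableSet B) (hπB : 0 < π B) (z : X) : 0 < hitProb P B z := by
  by_contra! hz₀
  set R := {z | hitProb P B z = 0}
  set D := R \ B
  -- `D` is absorbing and reached from `z`, so it carries `φ`; by stationarity `Dᶜ ⊇ B` is
  -- absorbing up to a `π`-null set, so from `π`-a.e. point of `B` the chain never enters `D`.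
  have hD : MeasurableSet D :=
    ((measurable_hitProb hB) (measurableSet_singleton 0)).diff hB
  have hRD : ∀ z ∈ R, ∀ᵐ y ∂P z, y ∈ D := fun z hz =>
    (ae_notMem_and_hitProb_eq_zero hB hz).mono fun y hy => ⟨hy.2, hy.1⟩
  have hDabs : IsAbsorbing P D := fun z hz => hRD z hz.1
  have hφD : 0 < φ D := by
    have hφDc : φ Dᶜ = 0 := by
      by_contra h
      exact (hφ.2 z trivial Dᶜ hD.compl (pos_iff_ne_zero.mpr h)).ne'
        (hitProb_eq_zero_of_ae_mem hDabs disjoint_compl_right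
          (hRD z (nonpos_iff_eq_zero.mp hz₀)))
    have hφuniv := measure_add_measure_compl (μ := φ) hD
    rw [hφDc, add_zero] at hφuniv
    rw [hφuniv]
    exact pos_iff_ne_zero.mpr (Measure.measure_univ_ne_zero.mpr hφ.1)
  obtain ⟨T, hπT, hTabs⟩ := hP.exists_isAbsorbing_diff (hstat.ae_isAbsorbing_compl hD hDabs)
  obtain ⟨z₁, hz₁⟩ : (Dᶜ \ T).Nonempty := by
    refine nonempty_of_measure_ne_zero (μ := π) ?_
    rw [measure_sdiff_null hπT]
    exact (hπB.trans_le (measure_mono (show B ⊆ Dᶜ from fun y hy hyD => hyD.2 hy))).ne'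
  exact (hφ.2 z₁ trivial D hD hφD).ne'
    (hitProb_eq_zero_of_ae_mem hTabs (disjoint_compl_left.mono_left sdiff_subset)
      (hTabs z₁ hz₁))

lemma IrreducibleOn.ae_hitProb_eq_one [IsProbabilityMeasure π] (hφ : IrreducibleOn P φ univ)
    (hstat : Stationary P π) (hP : AbsolutelyContinuousOffDiag P π)
    {A : Set X} (hA : MeasurableSet A) (hπA : 0 < π A) : ∀ᵐ z ∂π, hitProb P A z = 1 := by
  set g := hitStep A (hitProb P A)
  have hg : Measurable g := measurable_hitStep hA (measurable_hitProb hA)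
  have hg_le : ∀ y, g y ≤ 1 := hitStep_le_one hitProb_le_one
  have hfix : ∀ x, ∫⁻ y, g y ∂P x = hitProb P A x := fun x => (hitProb_eq_lintegral hA x).symm
  have hle : ∀ x, hitProb P A x ≤ g x := fun x => by
    by_cases hx : x ∈ A <;> simp [g, hx, hitProb_le_one]
  have hharm : ∀ᵐ z ∂π, hitProb P A z = g z := by
    have hfin : ∫⁻ y, g y ∂π ≠ ∞ :=
      ne_top_of_le_ne_top (by simp) (lintegral_mono hg_le)
    filter_upwards [hstat.ae_lintegral_eq_of_lintegral_le hg hfin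
      fun x => (hfix x).trans_le (hle x)] with z hz
    rwa [← hfix]
  set S := {y | g y = 1}
  have hS : ∀ᵐ z ∂π, z ∈ S → ∀ᵐ y ∂P z, y ∈ S := by
    filter_upwards [hharm] with z hz hzS
    have h1 : ∫⁻ y, g y ∂P z = ∫⁻ _, 1 ∂P z := by
      rw [hfix, hz, hzS.out, lintegral_const, measure_univ, mul_one]
    exact ae_eq_of_ae_le_of_lintegral_le (ae_of_all _ hg_le) (by simp [h1]) aemeasurable_const
      h1.ge
  obtain ⟨T, hπT, hTabs⟩ := hP.exists_isAbsorbing_diff hS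
  obtain ⟨y, hyA, hyT⟩ : (A \ T).Nonempty := by
    refine nonempty_of_measure_ne_zero (μ := π) ?_
    rw [measure_sdiff_null hπT]
    exact hπA.ne'
  have hlt : π {z | g z < 1} = 0 := by
    by_contra h
    refine (hφ.hitProb_pos hstat hP (measurableSet_lt hg measurable_const)
      (pos_iff_ne_zero.mpr h) y).ne' (hitProb_eq_zero_of_ae_mem hTabs ?_ (hTabs y ⟨?_, hyT⟩))
    · exact disjoint_left.mpr fun z hz hz' => (show g z < 1 from hz').ne hz.1
    · simp [S, g, hyA]
  filter_upwards [hharm, measure_eq_zero_iff_ae_notMem.mp hlt] with z hz hz'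
  exact hz.trans (le_antisymm (hg_le z) (not_lt.mp hz'))

lemma IrreducibleOn.apply_ne_dirac [IsProbabilityMeasure π] (hφ : IrreducibleOn P φ univ)
    (hstat : Stationary P π) (hP : AbsolutelyContinuousOffDiag P π) {x : X} (hx : π {x} < 1) :
    P x ≠ Measure.dirac x := by
  intro hPx
  obtain ⟨B, hxB, hB, hπB⟩ := exists_measurable_superset π {x}
  have hπBc : 0 < π Bᶜ := by
    rw [prob_compl_eq_one_sub hB, hπB]
    exact tsub_pos_of_lt hx
  exact (hφ.hitProb_pos hstat hP hB.compl hπBc x).ne'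
    (hitProb_eq_zero_of_apply_eq_dirac hB.compl hPx fun h => h (hxB rfl))

theorem harrisRecurrentOn_univ [IsProbabilityMeasure π] (hstat : Stationary P π)
    (hP : AbsolutelyContinuousOffDiag P π) (hirr : PhiIrreducibleOn P univ)
    (hatom : ∀ x, π {x} < 1) : HarrisRecurrentOn P π univ := by
  obtain ⟨φ, -, hφ⟩ := hirr
  rintro A hA hπA x -
  obtain ⟨μ, c, hμ, hPx⟩ := hP x
  have hμg : ∫⁻ y, hitStep A (hitProb P A) y ∂μ = μ univ := by
    rw [← lintegral_one]
    refine lintegral_congr_ae (hμ.ae_le ?_)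
    filter_upwards [hφ.ae_hitProb_eq_one hstat hP hA hπA] with y hy
    by_cases hyA : y ∈ A <;> simp [hyA, hy]
  have hmass : μ univ + c = 1 := by
    simpa [hPx] using measure_univ (μ := P x)
  have hfix : hitProb P A x = μ univ + c * hitStep A (hitProb P A) x := by
    rw [hitProb_eq_lintegral hA, hPx, lintegral_add_measure, lintegral_smul_measure,
      lintegral_dirac' x (measurable_hitStep hA (measurable_hitProb hA)), hμg, smul_eq_mul]
  by_cases hxA : x ∈ A
  · rwa [hfix, hitStep_of_mem hxA, mul_one]
  · have hμ0 : μ univ ≠ 0 := by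
      intro h0
      have hc : c = 1 := by simpa [h0] using hmass
      refine hφ.apply_ne_dirac hstat hP (hatom x) ?_
      rw [hPx, Measure.measure_univ_eq_zero.mp h0, hc, zero_add, one_smul]
    rw [hitStep_of_notMem hxA] at hfix
    exact eq_one_of_eq_add_mul hmass hμ0 (hitProb_le_one x) hfix

end Recurrence

section RejectionKernel

variable {ν : Measure X} {ρ : X → X → ℝ≥0∞} {P : Kernel X X}

lemma absolutelyContinuousOffDiag_of_apply_eq {π : Measure X} (hνπ : ν ≪ π)
    (hP : ∀ x, ∀ E : Set X, MeasurableSet E →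
      P x E = (∫⁻ y in E, ρ x y ∂ν) + (1 - ∫⁻ y, ρ x y ∂ν) * E.indicator 1 x) :
    AbsolutelyContinuousOffDiag P π := by
  refine fun x => ⟨ν.withDensity (ρ x), 1 - ∫⁻ y, ρ x y ∂ν,
    (withDensity_absolutelyContinuous _ _).trans hνπ, ?_⟩
  ext E hE
  rw [hP x E hE, Measure.add_apply, Measure.smul_apply, withDensity_apply _ hE,
    Measure.dirac_apply' _ hE, smul_eq_mul]

lemma stationary_withDensity_of_detailedBalance [SFinite ν] {w : X → ℝ≥0∞} (hw : Measurable w)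
    (hρ : Measurable (Function.uncurry ρ)) (hρ_le : ∀ x, ∫⁻ y, ρ x y ∂ν ≤ 1)
    (hbal : ∀ x y, w x * ρ x y = w y * ρ y x)
    (hP : ∀ x, ∀ E : Set X, MeasurableSet E →
      P x E = (∫⁻ y in E, ρ x y ∂ν) + (1 - ∫⁻ y, ρ x y ∂ν) * E.indicator 1 x) :
    Stationary P (ν.withDensity w) := by
  intro E hE
  set r : X → ℝ≥0∞ := fun x => ∫⁻ y, ρ x y ∂ν
  have hwρ : Measurable (Function.uncurry fun x y => w x * ρ x y) :=
    (hw.comp measurable_fst).mul hρ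
  have hr : Measurable r := hρ.lintegral_prod_right
  have hρx : ∀ x, Measurable (ρ x) := fun x => hρ.comp measurable_prodMk_left
  rw [lintegral_withDensity_eq_lintegral_mul ν hw (P.measurable_coe hE)]
  calc ∫⁻ x, (w * fun x => P x E) x ∂ν
      = ∫⁻ x, ((∫⁻ y in E, w x * ρ x y ∂ν) + E.indicator (fun x => w x * (1 - r x)) x) ∂ν := by
        congr 1 with x
        rw [Pi.mul_apply, hP x E hE, mul_add, lintegral_const_mul _ (hρx x)]
        by_cases hx : x ∈ E <;> simp [hx, r]
    _ = (∫⁻ y in E, ∫⁻ x, w y * ρ y x ∂ν ∂ν) + ∫⁻ x in E, w x * (1 - r x) ∂ν := by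
        rw [lintegral_add_left hwρ.lintegral_prod_right, lintegral_indicator hE,
          lintegral_lintegral_swap hwρ.aemeasurable]
        simp_rw [hbal]
    _ = (∫⁻ y in E, w y * r y ∂ν) + ∫⁻ y in E, w y * (1 - r y) ∂ν := by
        congr 1
        exact lintegral_congr fun y => lintegral_const_mul _ (hρx y)
    _ = ∫⁻ y in E, (w y * r y + w y * (1 - r y)) ∂ν := (lintegral_add_left (hw.mul hr) _).symm
    _ = ν.withDensity w E := by
        rw [withDensity_apply _ hE]
        refine lintegral_congr fun y => ?_
        rw [← mul_add, add_tsub_cancel_of_le (hρ_le y), mul_one]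

end RejectionKernel

end Markov

section MetropolisHastings

variable {f : X → ℝ} {q : X → X → ℝ}

lemma mhAlpha_le_one (x y : X) : mhAlpha f q x y ≤ 1 := by
  unfold mhAlpha
  split_ifs
  exacts [le_rfl, min_le_left _ _]

lemma mul_mhAlpha {x y : X} (hxy : 0 ≤ f x * q x y) (hyx : 0 ≤ f y * q y x) :
    f x * (q x y * mhAlpha f q x y) = min (f x * q x y) (f y * q y x) := by
  unfold mhAlpha
  split_ifs with h0
  · rw [mul_one, h0, min_eq_left hyx]
  · rw [← mul_assoc, mul_min_of_nonneg _ _ hxy, mul_one,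
      mul_div_cancel₀ _ h0]

lemma mhAlpha_detailedBalance (hf : ∀ x, 0 < f x) (hq : ∀ x y, 0 ≤ q x y) (x y : X) :
    ENNReal.ofReal (f x) * ENNReal.ofReal (q x y * mhAlpha f q x y) =
      ENNReal.ofReal (f y) * ENNReal.ofReal (q y x * mhAlpha f q y x) := by
  have hfq : ∀ x y, 0 ≤ f x * q x y := fun x y => mul_nonneg (hf x).le (hq x y)
  rw [← ENNReal.ofReal_mul (hf x).le, ← ENNReal.ofReal_mul (hf y).le,
    mul_mhAlpha (hfq x y) (hfq y x), mul_mhAlpha (hfq y x) (hfq x y), min_comm]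

lemma measurable_mhAlpha [MeasurableSpace X] (hf : Measurable f)
    (hq : Measurable (Function.uncurry q)) :
    Measurable fun p : X × X => mhAlpha f q p.1 p.2 := by
  have hxy : Measurable fun p : X × X => f p.1 * q p.1 p.2 := (hf.comp measurable_fst).mul hq
  have hyx : Measurable fun p : X × X => f p.2 * q p.2 p.1 :=
    (hf.comp measurable_snd).mul (hq.comp measurable_swap)
  exact Measurable.ite (hxy (measurableSet_singleton 0)) measurable_const
    (measurable_const.min (hyx.div hxy))

end MetropolisHastings

end MCMCHarris

/-- Theorem 8. Every ϕ-irreducible full-dimensional Metropolis–Hastings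
algorithm is Harris recurrent: if `π` is the normalized measure with density `f > 0` with
respect to `ν`, `π` is not a point mass, `q` is a jointly measurable proposal density with
`∫ q(x,y) ν(dy) = 1`, and `P` is the Metropolis–Hastings kernel
`P(x, A) = ∫_A q(x,y) α(x,y) ν(dy) + (1 − ∫ q(x,y) α(x,y) ν(dy)) δ_x(A)`,
then ϕ-irreducibility of `P` implies that for every `A` with `π(A) > 0` and every `x`,
`P(τ_A < ∞ | X₀ = x) = 1`. -/
theorem thm8_metropolis_harris {X : Type*} [MeasurableSpace X]
    (ν : Measure X) [SigmaFinite ν]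
    (f : X → ℝ) (hf_meas : Measurable f) (hf_pos : ∀ x, 0 < f x)
    (hf_int_pos : 0 < ∫⁻ x, ENNReal.ofReal (f x) ∂ν)
    (hf_int : ∫⁻ x, ENNReal.ofReal (f x) ∂ν ≠ ∞)
    (q : X → X → ℝ) (hq_meas : Measurable (Function.uncurry q))
    (hq_nonneg : ∀ x y, 0 ≤ q x y)
    (hq_int : ∀ x, ∫⁻ y, ENNReal.ofReal (q x y) ∂ν = 1)
    (π : Measure X)
    (hπ : π = (∫⁻ x, ENNReal.ofReal (f x) ∂ν)⁻¹ •
      ν.withDensity (fun x => ENNReal.ofReal (f x)))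
    (hπ_nondeg : ∀ x, π {x} < 1)
    (P : Kernel X X) [IsMarkovKernel P]
    (hP : ∀ x, ∀ A : Set X, MeasurableSet A →
      P x A = (∫⁻ y in A, ENNReal.ofReal (q x y * mhAlpha f q x y) ∂ν) +
        (1 - ∫⁻ y, ENNReal.ofReal (q x y * mhAlpha f q x y) ∂ν) * A.indicator 1 x)
    (hirr : PhiIrreducibleOn P Set.univ) :
    HarrisRecurrentOn P π Set.univ := by
  set ρ : X → X → ℝ≥0∞ := fun x y => ENNReal.ofReal (q x y * mhAlpha f q x y)
  have hρ : Measurable (Function.uncurry ρ) :=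
    (hq_meas.mul (measurable_mhAlpha hf_meas hq_meas)).ennreal_ofReal
  have hρ_le : ∀ x, ∫⁻ y, ρ x y ∂ν ≤ 1 := fun x => hq_int x ▸ lintegral_mono fun y =>
    ENNReal.ofReal_le_ofReal (mul_le_of_le_one_right (hq_nonneg x y) (mhAlpha_le_one x y))
  have hνπ : ν ≪ π := hπ ▸ (withDensity_absolutelyContinuous' hf_meas.ennreal_ofReal.aemeasurable
    (ae_of_all _ fun x => (ENNReal.ofReal_pos.mpr (hf_pos x)).ne')).trans
    (Measure.absolutelyContinuous_smul (ENNReal.inv_ne_zero.mpr hf_int))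
  have : IsProbabilityMeasure π := ⟨by
    rw [hπ, Measure.smul_apply, withDensity_apply _ MeasurableSet.univ, setLIntegral_univ,
      smul_eq_mul, ENNReal.inv_mul_cancel hf_int_pos.ne' hf_int]⟩
  refine harrisRecurrentOn_univ ?_ (absolutelyContinuousOffDiag_of_apply_eq hνπ hP) hirr
    hπ_nondeg
  rw [hπ]
  exact (stationary_withDensity_of_detailedBalance hf_meas.ennreal_ofReal hρ hρ_le
    (mhAlpha_detailedBalance hf_pos hq_nonneg) hP).smul _
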